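/- Let w1 and w2 be elements of W^S of equal length, l(w1) = l(w2). Then w1.0 − w2.0 lies in the sublattice Q_S = ℤS of the root lattice. (Corollary on incomparability of the weights w.0, part 1; it reflects that w1.0 and w2.0 both occur as weights of Λ^{l(w1)}(g/p_S) when g/p_S is irreducible.) -/

import Mathlib

open scoped RealInnerProductSpace

noncomputable section

/-- The pairing of a weight with the coroot `β^∨ = 2β/(β,β)` of a vector `β`:
`⟨lam, β^∨⟩ = 2(lam,β)/(β,β)`. -/
def copair {V : Type*} [NormedAddCommGroup V] [InnerProductSpace ℝ V] (lam β : V) : ℝ :=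
  2 * ⟪lam, β⟫ / ⟪β, β⟫

/-- A finite reduced crystallographic root system together with a fixed base of
simple roots, realized in a finite-dimensional real inner product space. -/
structure BasedRootSystem (V : Type*) [NormedAddCommGroup V] [InnerProductSpace ℝ V]
    [FiniteDimensional ℝ V] where
  /-- the (finite) set of roots -/
  roots : Finset V
  /-- the number of simple roots -/
  rank : ℕ
  /-- the simple roots; they form a basis of the ambient space -/
  b : Module.Basis (Fin rank) ℝ V
  simple_mem : ∀ i, b i ∈ roots
  zero_not_mem : (0 : V) ∉ roots
  /-- the root system is reduced -/
  reduced : ∀ β ∈ roots, ∀ c : ℝ, c • β ∈ roots → c = 1 ∨ c = -1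
  /-- the root system is crystallographic -/
  crystallographic : ∀ β ∈ roots, ∀ γ ∈ roots, ∃ n : ℤ, copair β γ = (n : ℝ)
  /-- the set of roots is stable under the reflection in (the hyperplane orthogonal to)
  any root -/
  reflect_mem : ∀ β ∈ roots, ∀ γ ∈ roots, Submodule.reflection ((ℝ ∙ β)ᗮ) γ ∈ roots
  /-- each root is an integral linear combination of the simple roots -/
  coeff_int : ∀ β ∈ roots, ∀ i, ∃ n : ℤ, b.repr β i = (n : ℝ)
  /-- each root has either all coefficients nonnegative or all nonpositive -/
  coeff_sign : ∀ β ∈ roots, (∀ i, 0 ≤ b.repr β i) ∨ (∀ i, b.repr β i ≤ 0)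

namespace BasedRootSystem

variable {V : Type*} [NormedAddCommGroup V] [InnerProductSpace ℝ V] [FiniteDimensional ℝ V]
variable (P : BasedRootSystem V)

/-- the set `R⁺` of positive roots -/
def posRoots : Finset V :=
  (P.roots.finite_toSet.inter_of_left {β | ∀ i, 0 ≤ P.b.repr β i}).toFinset

/-- `ρ`, half the sum of the positive roots -/
def rho : V := (2 : ℝ)⁻¹ • ∑ β ∈ P.posRoots, β

/-- the simple reflection corresponding to the simple root `b i` -/
def sr (i : Fin P.rank) : V ≃ₗᵢ[ℝ] V := Submodule.reflection ((ℝ ∙ P.b i)ᗮ)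

/-- the Weyl group, generated by the simple reflections -/
def weylGroup : Subgroup (V ≃ₗᵢ[ℝ] V) := Subgroup.closure (Set.range P.sr)

/-- the length of a Weyl group element: the minimal number of factors in an
expression as a product of simple reflections -/
def len (w : V ≃ₗᵢ[ℝ] V) : ℕ :=
  sInf {n | ∃ f : Fin n → Fin P.rank, w = (List.ofFn fun k => P.sr (f k)).prod}

/-- the shifted (dot) action on the zero weight: `w.0 = wρ - ρ` -/
def dotZero (w : V ≃ₗᵢ[ℝ] V) : V := w P.rho - P.rho

/-- the sublattice `Q_S ⊆ Q` generated by the simple roots indexed by `S` -/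
def QS (S : Set (Fin P.rank)) : AddSubgroup V := AddSubgroup.closure (P.b '' S)

/-- the positive cone `Q⁺` of nonnegative integer combinations of simple roots -/
def Qplus : AddSubmonoid V := AddSubmonoid.closure (Set.range P.b)

/-- `W^S = {w ∈ W | R_S^+ ⊆ w R^+}` -/
def WS (S : Set (Fin P.rank)) : Set (V ≃ₗᵢ[ℝ] V) :=
  {w | w ∈ P.weylGroup ∧
    ∀ β ∈ P.posRoots, β ∈ P.QS S → ∃ γ ∈ P.posRoots, w γ = β}

/-- irreducibility of the root system: the base cannot be partitioned into two
nonempty mutually orthogonal subsets -/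
def Irred : Prop :=
  ∀ A B : Set (Fin P.rank), A ∪ B = Set.univ →
    (∀ i ∈ A, ∀ j ∈ B, ⟪P.b i, P.b j⟫ = 0) → A = ∅ ∨ B = ∅

/-- the weight lattice `P` -/
def weights : Set V := {lam | ∀ i, ∃ n : ℤ, copair lam (P.b i) = (n : ℝ)}

/-- the dominant integral weights `P⁺` -/
def domWeights : Set V := {lam | lam ∈ P.weights ∧ ∀ i, 0 ≤ copair lam (P.b i)}

/-- the weights `P_S^+` which are dominant and integral with respect to `S` -/
def domWeightsS (S : Set (Fin P.rank)) : Set V :=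
  {lam | lam ∈ P.weights ∧ ∀ i ∈ S, 0 ≤ copair lam (P.b i)}

end BasedRootSystem

/-!
Write `N(w) = {β ∈ R⁺ | wβ ∉ R⁺}` for the inversion set of `w`. Since `β ↦ ±wβ` (the sign
chosen to make it positive) permutes `R⁺`, one gets `w.0 = wρ - ρ = ∑_{β ∈ N(w)} wβ`, and
`|N(w)| = l(w)` by the exchange condition. For `w ∈ W^S` and `β ∈ N(w)`, the positive root `-wβ`
is not in `Q_S`: every positive root in `Q_S` is `wγ` for some `γ ∈ R⁺`, whereas `-wβ = w(-β)`
with `-β ∉ R⁺`. So `α_s` occurs in `-wβ`, and by cominuscularity with coefficient exactly one. Hence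
`w.0 ≡ -l(w) α_s` modulo `Q_S`, and the difference for two elements of equal length lies in `Q_S`.
-/

open Finset

lemma reflection_span_singleton_orthogonal_apply {V : Type*} [NormedAddCommGroup V]
    [InnerProductSpace ℝ V] (β x : V) :
    (ℝ ∙ β)ᗮ.reflection x = x - copair x β • β := by
  rw [Submodule.reflection_orthogonal_apply, Submodule.reflection_singleton_apply, copair,
    real_inner_comm x β]
  simp only [RCLike.ofReal_real_eq_id, id_eq]
  rw [← real_inner_self_eq_norm_sq, two_smul]
  module

namespace BasedRootSystem

variable {V : Type*} [NormedAddCommGroup V] [InnerProductSpace ℝ V] [FiniteDimensional ℝ V]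
  (P : BasedRootSystem V)

section Roots

lemma mem_posRoots {β : V} : β ∈ P.posRoots ↔ β ∈ P.roots ∧ ∀ i, 0 ≤ P.b.repr β i := by
  simp [posRoots]

lemma b_mem_posRoots (i : Fin P.rank) : P.b i ∈ P.posRoots :=
  P.mem_posRoots.2 ⟨P.simple_mem i, fun j => by simp [Finsupp.single_apply]; split_ifs <;> simp⟩

lemma neg_mem_roots {β : V} (h : β ∈ P.roots) : -β ∈ P.roots := by
  simpa [Submodule.reflection_orthogonalComplement_singleton_eq_neg] using P.reflect_mem β h β h

lemma neg_notMem_posRoots {β : V} (h : β ∈ P.posRoots) : -β ∉ P.posRoots := by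
  intro hneg
  have hzero : P.b.repr β = 0 := Finsupp.ext fun i => by
    have := (P.mem_posRoots.1 hneg).2 i
    simp only [map_neg, Finsupp.coe_neg, Pi.neg_apply, Left.nonneg_neg_iff] at this
    exact le_antisymm this ((P.mem_posRoots.1 h).2 i)
  exact P.zero_not_mem (P.b.repr.map_eq_zero_iff.1 hzero ▸ (P.mem_posRoots.1 h).1)

lemma neg_mem_posRoots_of_notMem {β : V} (hβ : β ∈ P.roots) (h : β ∉ P.posRoots) :
    -β ∈ P.posRoots := by
  rcases P.coeff_sign β hβ with hpos | hneg
  · exact absurd (P.mem_posRoots.2 ⟨hβ, hpos⟩) h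
  · exact P.mem_posRoots.2 ⟨P.neg_mem_roots hβ, fun i => by simpa using hneg i⟩

lemma exists_repr_pos_of_ne {i : Fin P.rank} {β : V} (hβ : β ∈ P.posRoots) (hne : β ≠ P.b i) :
    ∃ j ≠ i, 0 < P.b.repr β j := by
  obtain ⟨hr, hpos⟩ := P.mem_posRoots.1 hβ
  by_contra! hcon
  have hβeq : β = P.b.repr β i • P.b i :=
    calc β = ∑ j, P.b.repr β j • P.b j := (P.b.sum_repr β).symm
      _ = P.b.repr β i • P.b i := Fintype.sum_eq_single i fun j hj => by
          rw [le_antisymm (hcon j hj) (hpos j), zero_smul]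
  rcases P.reduced (P.b i) (P.simple_mem i) _ (by rwa [← hβeq]) with h1 | h1
  · exact hne (by rw [hβeq, h1, one_smul])
  · linarith [hpos i]

end Roots

section SimpleReflections

lemma sr_apply (i : Fin P.rank) (x : V) : P.sr i x = x - copair x (P.b i) • P.b i :=
  reflection_span_singleton_orthogonal_apply _ _

lemma sr_sr (i : Fin P.rank) (x : V) : P.sr i (P.sr i x) = x :=
  Submodule.reflection_reflection _ x

lemma sr_b_self (i : Fin P.rank) : P.sr i (P.b i) = -P.b i :=
  Submodule.reflection_orthogonalComplement_singleton_eq_neg _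

lemma sr_mul_self (i : Fin P.rank) : P.sr i * P.sr i = 1 :=
  Submodule.reflection_mul_reflection _

lemma sr_inv (i : Fin P.rank) : (P.sr i)⁻¹ = P.sr i :=
  inv_eq_of_mul_eq_one_left (P.sr_mul_self i)

lemma sr_mem_roots (i : Fin P.rank) {β : V} (h : β ∈ P.roots) : P.sr i β ∈ P.roots :=
  P.reflect_mem _ (P.simple_mem i) _ h

lemma repr_sr_of_ne {i j : Fin P.rank} (hj : j ≠ i) (β : V) :
    P.b.repr (P.sr i β) j = P.b.repr β j := by
  simp [sr_apply, hj.symm]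

lemma sr_mem_posRoots {i : Fin P.rank} {β : V} (hβ : β ∈ P.posRoots) (hne : β ≠ P.b i) :
    P.sr i β ∈ P.posRoots := by
  obtain ⟨j, hji, hj⟩ := P.exists_repr_pos_of_ne hβ hne
  have hroot := P.sr_mem_roots i (P.mem_posRoots.1 hβ).1
  refine (P.coeff_sign _ hroot).elim (fun h => P.mem_posRoots.2 ⟨hroot, h⟩) fun h => ?_
  linarith [P.repr_sr_of_ne hji β ▸ h j]

lemma eq_b_of_sr_notMem_posRoots {i : Fin P.rank} {β : V} (hβ : β ∈ P.posRoots)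
    (h : P.sr i β ∉ P.posRoots) : β = P.b i := by
  by_contra hne
  exact h (P.sr_mem_posRoots hβ hne)

lemma sr_mul_eq_mul_sr {u : V ≃ₗᵢ[ℝ] V} {i j : Fin P.rank} (h : u (P.b i) = P.b j) :
    P.sr j * u = u * P.sr i := by
  ext x
  have hcopair : copair (u x) (u (P.b i)) = copair x (P.b i) := by
    simp [copair, LinearIsometryEquiv.inner_map_map]
  simp only [LinearIsometryEquiv.coe_mul, Function.comp_apply, sr_apply, ← h, hcopair,
    map_sub, map_smul]

end SimpleReflections

section Words

def wprod (l : List (Fin P.rank)) : V ≃ₗᵢ[ℝ] V := (l.map P.sr).prod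

@[simp]
lemma wprod_nil : P.wprod [] = 1 := rfl

@[simp]
lemma wprod_cons (i : Fin P.rank) (l : List (Fin P.rank)) :
    P.wprod (i :: l) = P.sr i * P.wprod l := by
  simp [wprod]

@[simp]
lemma wprod_append (l₁ l₂ : List (Fin P.rank)) :
    P.wprod (l₁ ++ l₂) = P.wprod l₁ * P.wprod l₂ := by
  simp [wprod]

lemma wprod_ofFn {n : ℕ} (f : Fin n → Fin P.rank) :
    P.wprod (List.ofFn f) = (List.ofFn fun k => P.sr (f k)).prod := by
  rw [wprod, List.map_ofFn]
  rfl

lemma wprod_mem (l : List (Fin P.rank)) : P.wprod l ∈ P.weylGroup :=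
  P.weylGroup.list_prod_mem fun _ hx => by
    obtain ⟨i, -, rfl⟩ := List.mem_map.1 hx
    exact Subgroup.subset_closure ⟨i, rfl⟩

lemma exists_wprod_eq {w : V ≃ₗᵢ[ℝ] V} (hw : w ∈ P.weylGroup) : ∃ l, P.wprod l = w := by
  induction hw using Subgroup.closure_induction_left with
  | one => exact ⟨[], rfl⟩
  | mul_left _ hx _ _ ih =>
    obtain ⟨i, rfl⟩ := hx
    obtain ⟨l, rfl⟩ := ih
    exact ⟨i :: l, P.wprod_cons i l⟩
  | inv_mul_cancel _ hx _ _ ih =>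
    obtain ⟨i, rfl⟩ := hx
    obtain ⟨l, rfl⟩ := ih
    exact ⟨i :: l, by rw [sr_inv, wprod_cons]⟩

lemma len_wprod_le (l : List (Fin P.rank)) : P.len (P.wprod l) ≤ l.length :=
  Nat.sInf_le ⟨l.get, by rw [← wprod_ofFn, List.ofFn_get]⟩

lemma exists_reduced_word {w : V ≃ₗᵢ[ℝ] V} (hw : w ∈ P.weylGroup) :
    ∃ l, l.length = P.len w ∧ P.wprod l = w := by
  obtain ⟨l, rfl⟩ := P.exists_wprod_eq hw
  have hne : {n | ∃ f : Fin n → Fin P.rank,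
      P.wprod l = (List.ofFn fun k => P.sr (f k)).prod}.Nonempty :=
    ⟨l.length, l.get, by rw [← wprod_ofFn, List.ofFn_get]⟩
  obtain ⟨f, hf⟩ := Nat.sInf_mem hne
  exact ⟨List.ofFn f, List.length_ofFn, by rw [wprod_ofFn, ← hf]⟩

lemma len_mul_sr_le {w : V ≃ₗᵢ[ℝ] V} (hw : w ∈ P.weylGroup) (i : Fin P.rank) :
    P.len (w * P.sr i) ≤ P.len w + 1 := by
  obtain ⟨l, hl, rfl⟩ := P.exists_reduced_word hw
  simpa [hl] using P.len_wprod_le (l ++ [i])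

lemma apply_mem_roots {w : V ≃ₗᵢ[ℝ] V} (hw : w ∈ P.weylGroup) {β : V} (hβ : β ∈ P.roots) :
    w β ∈ P.roots := by
  obtain ⟨l, rfl⟩ := P.exists_wprod_eq hw
  clear hw
  induction l with
  | nil => exact hβ
  | cons i l ih => simpa using P.sr_mem_roots i ih

/-- The exchange condition. -/
lemma exists_shorter_word_of_notMem_posRoots (l : List (Fin P.rank)) {i : Fin P.rank}
    (h : P.wprod l (P.b i) ∉ P.posRoots) :
    ∃ l' : List (Fin P.rank), l'.length < l.length ∧ P.wprod l * P.sr i = P.wprod l' := by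
  induction l with
  | nil => exact absurd (P.b_mem_posRoots i) h
  | cons j t ih =>
    rw [wprod_cons, LinearIsometryEquiv.coe_mul, Function.comp_apply] at h
    by_cases ht : P.wprod t (P.b i) ∈ P.posRoots
    · refine ⟨t, by simp, ?_⟩
      rw [wprod_cons, mul_assoc, ← P.sr_mul_eq_mul_sr (P.eq_b_of_sr_notMem_posRoots ht h),
        ← mul_assoc, sr_mul_self, one_mul]
    · obtain ⟨l', hlen, heq⟩ := ih ht
      exact ⟨j :: l', by simpa using hlen, by rw [wprod_cons, mul_assoc, heq, wprod_cons]⟩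

end Words

section Inversions

open Classical in
def invs (w : V ≃ₗᵢ[ℝ] V) : Finset V := {β ∈ P.posRoots | w β ∉ P.posRoots}

lemma mem_invs {w : V ≃ₗᵢ[ℝ] V} {β : V} :
    β ∈ P.invs w ↔ β ∈ P.posRoots ∧ w β ∉ P.posRoots := by
  classical
  simp [invs]

lemma invs_one : P.invs 1 = ∅ :=
  eq_empty_of_forall_notMem fun _ hβ => (P.mem_invs.1 hβ).2 (P.mem_invs.1 hβ).1

lemma invs_mul_sr [DecidableEq V] {w : V ≃ₗᵢ[ℝ] V} {i : Fin P.rank}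
    (h : w (P.b i) ∈ P.posRoots) :
    P.invs (w * P.sr i) = insert (P.b i) ((P.invs w).image (P.sr i)) := by
  ext β
  simp only [mem_invs, mem_insert, mem_image, LinearIsometryEquiv.coe_mul, Function.comp_apply]
  constructor
  · rintro ⟨hβ, hneg⟩
    by_cases hbi : β = P.b i
    · exact .inl hbi
    · exact .inr ⟨P.sr i β, ⟨P.sr_mem_posRoots hβ hbi, hneg⟩, P.sr_sr i β⟩
  · rintro (rfl | ⟨γ, ⟨hγ, hwγ⟩, rfl⟩)
    · rw [sr_b_self, map_neg]
      exact ⟨P.b_mem_posRoots i, P.neg_notMem_posRoots h⟩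
    · have hγi : γ ≠ P.b i := fun hc => hwγ (hc ▸ h)
      rw [sr_sr]
      exact ⟨P.sr_mem_posRoots hγ hγi, hwγ⟩

lemma card_invs_mul_sr {w : V ≃ₗᵢ[ℝ] V} {i : Fin P.rank} (h : w (P.b i) ∈ P.posRoots) :
    #(P.invs (w * P.sr i)) = #(P.invs w) + 1 := by
  classical
  rw [P.invs_mul_sr h, card_insert_of_notMem, card_image_of_injective _ (P.sr i).injective]
  rintro hmem
  obtain ⟨γ, hγ, hγe⟩ := mem_image.1 hmem
  have : γ = -P.b i := by rw [← P.sr_sr i γ, hγe, sr_b_self]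
  exact P.neg_notMem_posRoots (P.b_mem_posRoots i) (this ▸ (P.mem_invs.1 hγ).1)

lemma card_invs_wprod_of_len_eq (l : List (Fin P.rank)) (hl : P.len (P.wprod l) = l.length) :
    #(P.invs (P.wprod l)) = l.length := by
  induction l using List.reverseRecOn with
  | nil => simp [invs_one]
  | append_singleton l i ih =>
    simp only [wprod_append, wprod_cons, wprod_nil, mul_one, List.length_append,
      List.length_singleton] at hl ⊢
    have hlen : P.len (P.wprod l) = l.length :=
      le_antisymm (P.len_wprod_le l) (by linarith [P.len_mul_sr_le (P.wprod_mem l) i])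
    have hpos : P.wprod l (P.b i) ∈ P.posRoots := by
      by_contra h
      obtain ⟨l', hl', heq⟩ := P.exists_shorter_word_of_notMem_posRoots l h
      linarith [heq ▸ P.len_wprod_le l']
    rw [P.card_invs_mul_sr hpos, ih hlen]

theorem card_invs_eq_len {w : V ≃ₗᵢ[ℝ] V} (hw : w ∈ P.weylGroup) : #(P.invs w) = P.len w := by
  obtain ⟨l, hl, rfl⟩ := P.exists_reduced_word hw
  rw [P.card_invs_wprod_of_len_eq l hl.symm, hl]

theorem dotZero_eq_sum_invs {w : V ≃ₗᵢ[ℝ] V} (hw : w ∈ P.weylGroup) :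
    P.dotZero w = ∑ β ∈ P.invs w, w β := by
  classical
  set φ : V → V := fun β => if w β ∈ P.posRoots then w β else -w β with hφ
  have hmaps : ∀ β ∈ P.posRoots, φ β ∈ P.posRoots := fun β hβ => by
    by_cases h : w β ∈ P.posRoots
    · simp [hφ, h]
    · simpa [hφ, h] using
        P.neg_mem_posRoots_of_notMem (P.apply_mem_roots hw (P.mem_posRoots.1 hβ).1) h
  have hinj : Set.InjOn φ P.posRoots := fun β hβ γ hγ h => by
    have hpm : w β = w γ ∨ w β = w (-γ) := by
      simp only [hφ, map_neg] at h ⊢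
      split_ifs at h
      exacts [.inl h, .inr h, .inr (neg_eq_iff_eq_neg.1 h), .inl (neg_inj.1 h)]
    rcases hpm with h | h
    · exact w.injective h
    · exact absurd (w.injective h ▸ hβ) (P.neg_notMem_posRoots hγ)
  have hsum : ∑ β ∈ P.posRoots, β = ∑ β ∈ P.posRoots, w β - (2 : ℝ) • ∑ β ∈ P.invs w, w β :=
    calc ∑ β ∈ P.posRoots, β = ∑ β ∈ P.posRoots, φ β :=
          (sum_nbij φ hmaps hinj (surjOn_of_injOn_of_card_le φ hmaps hinj le_rfl)
            fun _ _ => rfl).symm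
      _ = _ := by
          rw [invs, sum_filter, smul_sum, ← sum_sub_distrib]
          refine sum_congr rfl fun β _ => ?_
          by_cases h : w β ∈ P.posRoots
          · simp [hφ, h]
          · simp only [hφ, h, if_false, if_true, not_false_eq_true]
            module
  calc P.dotZero w = (2 : ℝ)⁻¹ • (∑ β ∈ P.posRoots, w β - ∑ β ∈ P.posRoots, β) := by
        rw [dotZero, rho, map_smul, map_sum, smul_sub]
    _ = ∑ β ∈ P.invs w, w β := by
        rw [hsum]
        module

end Inversions

section Cominuscule

lemma mem_QS_of_repr {S : Set (Fin P.rank)} {v : V} (hint : ∀ i, ∃ n : ℤ, P.b.repr v i = n)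
    (hS : ∀ i ∉ S, P.b.repr v i = 0) : v ∈ P.QS S := by
  rw [← P.b.sum_repr v]
  refine AddSubgroup.sum_mem _ fun i _ => ?_
  by_cases hi : i ∈ S
  · obtain ⟨n, hn⟩ := hint i
    rw [hn, Int.cast_smul_eq_zsmul]
    exact AddSubgroup.zsmul_mem _ (AddSubgroup.subset_closure (Set.mem_image_of_mem P.b hi)) n
  · rw [hS i hi, zero_smul]
    exact zero_mem _

variable {P} {s : Fin P.rank}

lemma sub_b_mem_QS {β : V} (hβ : β ∈ P.roots) (h1 : P.b.repr β s = 1) :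
    β - P.b s ∈ P.QS {i | i ≠ s} := by
  refine P.mem_QS_of_repr (fun i => ?_) fun i hi => ?_
  · obtain ⟨n, hn⟩ := P.coeff_int β hβ i
    by_cases h : i = s
    · subst h
      exact ⟨n - 1, by simp [hn]⟩
    · exact ⟨n, by simp [hn, Ne.symm h]⟩
  · obtain rfl : i = s := by simpa using hi
    simp [h1]

lemma repr_eq_one_of_notMem_QS (hcom : ∀ β ∈ P.posRoots, P.b.repr β s ≤ 1) {β : V}
    (hβ : β ∈ P.posRoots) (hQ : β ∉ P.QS {i | i ≠ s}) : P.b.repr β s = 1 := by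
  obtain ⟨hr, hpos⟩ := P.mem_posRoots.1 hβ
  obtain ⟨n, hn⟩ := P.coeff_int β hr s
  have hn0 : n ≠ 0 := by
    rintro rfl
    refine hQ (P.mem_QS_of_repr (P.coeff_int β hr) fun i hi => ?_)
    obtain rfl : i = s := by simpa using hi
    simpa using hn
  have h0 : 0 ≤ n := by exact_mod_cast hn ▸ hpos s
  have h1 : n ≤ 1 := by exact_mod_cast hn ▸ hcom β hβ
  rw [hn, show n = 1 by omega, Int.cast_one]

lemma apply_add_b_mem_QS (hcom : ∀ β ∈ P.posRoots, P.b.repr β s ≤ 1) {w : V ≃ₗᵢ[ℝ] V}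
    (hw : w ∈ P.WS {i | i ≠ s}) {β : V} (hβ : β ∈ P.invs w) :
    w β + P.b s ∈ P.QS {i | i ≠ s} := by
  obtain ⟨hβpos, hwβ⟩ := P.mem_invs.1 hβ
  have hroot : w β ∈ P.roots := P.apply_mem_roots hw.1 (P.mem_posRoots.1 hβpos).1
  have hpos : -w β ∈ P.posRoots := P.neg_mem_posRoots_of_notMem hroot hwβ
  have hQ : -w β ∉ P.QS {i | i ≠ s} := fun hQ => by
    obtain ⟨γ, hγ, hwγ⟩ := hw.2 _ hpos hQ
    rw [← map_neg] at hwγ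
    exact P.neg_notMem_posRoots hβpos (w.injective hwγ ▸ hγ)
  have := neg_mem (sub_b_mem_QS (P.neg_mem_roots hroot) (repr_eq_one_of_notMem_QS hcom hpos hQ))
  rwa [neg_sub, sub_neg_eq_add, add_comm] at this

lemma dotZero_add_len_smul_mem_QS (hcom : ∀ β ∈ P.posRoots, P.b.repr β s ≤ 1)
    {w : V ≃ₗᵢ[ℝ] V} (hw : w ∈ P.WS {i | i ≠ s}) :
    P.dotZero w + P.len w • P.b s ∈ P.QS {i | i ≠ s} := by
  rw [P.dotZero_eq_sum_invs hw.1, ← P.card_invs_eq_len hw.1, ← sum_const, ← sum_add_distrib]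
  exact AddSubgroup.sum_mem _ fun β hβ => apply_add_b_mem_QS hcom hw hβ

end Cominuscule

end BasedRootSystem

theorem dotZero_sub_dotZero_mem_QS_general
    {V : Type*} [NormedAddCommGroup V] [InnerProductSpace ℝ V] [FiniteDimensional ℝ V]
    (P : BasedRootSystem V) (s : Fin P.rank)
    (hcom : ∀ β ∈ P.posRoots, P.b.repr β s ≤ 1)
    (w1 w2 : V ≃ₗᵢ[ℝ] V)
    (hw1 : w1 ∈ P.WS {i | i ≠ s}) (hw2 : w2 ∈ P.WS {i | i ≠ s})
    (hlen : P.len w1 = P.len w2) :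
    P.dotZero w1 - P.dotZero w2 ∈ P.QS {i | i ≠ s} := by
  have h1 := BasedRootSystem.dotZero_add_len_smul_mem_QS hcom hw1
  rw [hlen] at h1
  simpa using sub_mem h1 (BasedRootSystem.dotZero_add_len_smul_mem_QS hcom hw2)

/-- If `w1, w2 ∈ W^S` have equal length, then `w1.0 - w2.0 ∈ Q_S`. -/
theorem dotZero_sub_dotZero_mem_QS
    {V : Type*} [NormedAddCommGroup V] [InnerProductSpace ℝ V] [FiniteDimensional ℝ V]
    (P : BasedRootSystem V) (hirr : P.Irred) (s : Fin P.rank)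
    (hcom : ∀ β ∈ P.posRoots, P.b.repr β s ≤ 1)
    (w1 w2 : V ≃ₗᵢ[ℝ] V)
    (hw1 : w1 ∈ P.WS {i | i ≠ s}) (hw2 : w2 ∈ P.WS {i | i ≠ s})
    (hlen : P.len w1 = P.len w2) :
    P.dotZero w1 - P.dotZero w2 ∈ P.QS {i | i ≠ s} :=
  dotZero_sub_dotZero_mem_QS_general P s hcom w1 w2 hw1 hw2 hlen
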